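/- Let X = A ∪ B ∪ {1} with A, B, {1} pairwise disjoint and A, B nonempty, and let S, S' be opposite precells relative to X. Define (S‖1,A) = {J ∈ P_*(A∪{1}) : (J ⊆ A and J ∈ S) or (1 ∈ J and A∖J ∈ S')}, and (S'‖1,A) analogously with S and S' exchanged. Then (S‖1,A) and (S'‖1,A) are opposite precells relative to A∪{1}. Moreover, if S is a cell, then (S‖1,A) and (S'‖1,A) are cells. -/

import Mathlib

open scoped Classical

namespace GRF

variable {α : Type*} [DecidableEq α]

/-- `J` is a proper (nonempty, not everything) subset of `X`. -/
def IsProperSubset (X J : Finset α) : Prop := J ⊆ X ∧ J ≠ ∅ ∧ J ≠ X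

/-- A proper sequence in `P(X)`: a nonempty list of pairwise disjoint nonempty
subsets of `X` with union `X`. -/
def IsProperSeq (X : Finset α) (c : List (Finset α)) : Prop :=
  c ≠ [] ∧ (∀ J ∈ c, J ≠ ∅) ∧ List.Pairwise (fun I J => I ∩ J = ∅) c ∧
    c.foldr (· ∪ ·) ∅ = X

/-- The product of two sequences: all `A_i ∩ B_j`, ordered first by `j` then by `i`,
with empty intersections deleted. -/
noncomputable def seqMul (a b : List (Finset α)) : List (Finset α) :=
  ((b.map fun B => a.map fun A => A ∩ B).flatten).filter fun J => J ≠ ∅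

/-- The set `S' = {J ⊆ X : X \ J ∈ S}` opposite to `S`. -/
def opp (X : Finset α) (S : Set (Finset α)) : Set (Finset α) :=
  {J | J ⊆ X ∧ X \ J ∈ S}

/-- A paracell associated to `X`. -/
def IsParacell (X : Finset α) (S : Set (Finset α)) : Prop :=
  S.Nonempty ∧ (∀ J ∈ S, IsProperSubset X J) ∧
    ∀ I ∈ S, ∀ J ∈ S, I ∩ J ∈ S ∨ I ∪ J ∈ S

/-- A precell associated to `X`. -/
def IsPrecell (X : Finset α) (S : Set (Finset α)) : Prop :=
  IsParacell X S ∧ ∀ J : Finset α, IsProperSubset X J → J ∈ S ∨ X \ J ∈ S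

/-- A cell associated to `X`: a precell admitting real weights with zero total sum,
positive on all members of the cell. -/
def IsCell (X : Finset α) (S : Set (Finset α)) : Prop :=
  IsPrecell X S ∧ ∃ s : α → ℝ,
    (∑ j ∈ X, s j) = 0 ∧ ∀ J ∈ S, 0 < ∑ j ∈ J, s j

/-- `Y ↓ S` for `S` a paracell associated to `X`. -/
def cellDown (Y X : Finset α) (S : Set (Finset α)) : Set (Finset α) :=
  {J | IsProperSubset (Y ∪ X) J ∧ (J ∩ X = X ∨ J ∩ X ∈ S)}

/-- `Y ↑ S'` for `S'` a paracell associated to `X`. -/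
def cellUp (Y X : Finset α) (S : Set (Finset α)) : Set (Finset α) :=
  {J | IsProperSubset (Y ∪ X) J ∧ (J ∩ X = ∅ ∨ J ∩ X ∈ S)}

/-- `Y ↓ j` for a single index `j`. -/
def ptDown (Y : Finset α) (j : α) : Set (Finset α) :=
  {J | IsProperSubset (insert j Y) J ∧ j ∈ J}

/-- `Y ↑ j` for a single index `j`. -/
def ptUp (Y : Finset α) (j : α) : Set (Finset α) :=
  {J | IsProperSubset (insert j Y) J ∧ j ∉ J}

/-- The underlying vector space of the algebra `A(X)`: formal complex linear
combinations of sequences of subsets. -/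
abbrev AX (α : Type*) [DecidableEq α] : Type _ := (List (Finset α)) →₀ ℂ

/-- The multiplication of `A(X)`, extending `seqMul` bilinearly. -/
noncomputable def amul (x y : AX α) : AX α :=
  x.sum fun a ca => y.sum fun b cb => Finsupp.single (seqMul a b) (ca * cb)

/-- The unit `{X}` of `A(X)`. -/
noncomputable def oneA (X : Finset α) : AX α := Finsupp.single [X] 1

/-- `Î = {I, X \ I}` as an element of `A(X)`. -/
noncomputable def hatI (X I : Finset α) : AX α := Finsupp.single [I, X \ I] 1

/-- Product of a list of elements of `A(X)` (with unit `{X}`). -/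
noncomputable def aprod (X : Finset α) (l : List (AX α)) : AX α :=
  l.foldr amul (oneA X)

/-- A `ν`-chain associated to `S'`: a proper sequence all of whose proper initial
partial unions lie in `S'`. -/
def IsChainFor (X : Finset α) (S' : Set (Finset α)) (c : List (Finset α)) : Prop :=
  IsProperSeq X c ∧
    ∀ r : ℕ, 0 < r → r < c.length → ((c.take r).foldr (· ∪ ·) ∅) ∈ S'

lemma IsProperSeq.nodup {X : Finset α} {c : List (Finset α)}
    (h : IsProperSeq X c) : c.Nodup := by
  obtain ⟨-, hne, hpw, -⟩ := h
  refine List.Pairwise.imp_of_mem ?_ hpw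
  intro a b ha _ hab
  intro h'
  subst h'
  exact hne a ha (by simpa using hab)

/-- `U_S = Σ_ν Σ_{ν-chains for S'} (−1)^{ν−1} {J_1,…,J_ν}`, as a function of the
opposite paracell `S'`. -/
noncomputable def US [Fintype α] (X : Finset α) (S' : Set (Finset α)) : AX α :=
  Finsupp.ofSupportFinite
    (fun c => if IsChainFor X S' c then (-1 : ℂ) ^ (c.length - 1) else 0)
    (Set.Finite.subset
      (List.finite_length_le (Finset α) (Fintype.card (Finset α)))
      (by
        intro c hc
        have h : IsChainFor X S' c := by
          by_contra h
          simp [Function.mem_support, h] at hc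
        exact h.1.nodup.length_le_card))

/-- The underlying vector space of `A(A∪{1}) ⊗ A(B∪{1})`. -/
abbrev AX2 (α : Type*) [DecidableEq α] : Type _ :=
  (List (Finset α) × List (Finset α)) →₀ ℂ

/-- The multiplication of the tensor product algebra. -/
noncomputable def tmul (x y : AX2 α) : AX2 α :=
  x.sum fun a ca => y.sum fun b cb =>
    Finsupp.single (seqMul a.1 b.1, seqMul a.2 b.2) (ca * cb)

/-- The tensor `u ⊗ v` of two elements of `A(A∪{1})` and `A(B∪{1})`. -/
noncomputable def tens (u v : AX α) : AX2 α :=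
  u.sum fun a ca => v.sum fun b cb => Finsupp.single (a, b) (ca * cb)

/-- The pair `(c_A, c_B)` of traces of a sequence `c` on `A∪{1}` and `B∪{1}`,
with empty sets deleted. -/
noncomputable def facSeq (A1 B1 : Finset α) (c : List (Finset α)) :
    List (Finset α) × List (Finset α) :=
  ((c.map fun J => J ∩ A1).filter fun J => J ≠ ∅,
   (c.map fun J => J ∩ B1).filter fun J => J ≠ ∅)

/-- The factorization map `Fac : A(X) → A(A∪{1}) ⊗ A(B∪{1})`. -/
noncomputable def Fac (A1 B1 : Finset α) (x : AX α) : AX2 α :=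
  x.sum fun c cc => Finsupp.single (facSeq A1 B1 c) cc

/-- The paracell `(S‖1,A)` built from opposite paracells `S`, `S'` relative to
`X = A ∪ B ∪ {o}`. -/
def restCell (A : Finset α) (o : α) (S S' : Set (Finset α)) : Set (Finset α) :=
  {J | IsProperSubset (insert o A) J ∧
    ((J ⊆ A ∧ J ∈ S) ∨ (o ∈ J ∧ A \ J ∈ S'))}

/-!
Let `π : X → A ∪ {o}` fix `A` and collapse `B ∪ {o}` to `o`. A subset `J ⊆ A ∪ {o}` lies in
`(S‖o,A)` exactly when its preimage `π⁻¹ J` lies in `S`: for `o ∉ J` the preimage is `J`, for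
`o ∈ J` it is `X ∖ (A ∖ J)`. Taking preimages along a surjection commutes with `∩`, `∪` and
complements and preserves properness, so precells pull back to precells and opposites to
opposites; cell weights `s` on `X` descend to `A ∪ {o}` by summing over the fibres of `π`.
-/

lemma IsProperSubset.sdiff {X J : Finset α} (h : IsProperSubset X J) :
    IsProperSubset X (X \ J) := by
  obtain ⟨hJX, hJ, hJX'⟩ := h
  refine ⟨Finset.sdiff_subset, ?_, ?_⟩
  · rw [Ne, Finset.sdiff_eq_empty_iff_subset]
    exact fun hXJ => hJX' (hJX.antisymm hXJ)
  · rw [Ne, Finset.sdiff_eq_self_iff_disjoint]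
    exact fun hdisj =>
      hJ ((Finset.disjoint_self_iff_empty _).1 (Finset.disjoint_of_subset_left hJX hdisj))

section Opp

variable {X : Finset α} {S : Set (Finset α)}

lemma mem_opp_iff {J : Finset α} (hJ : J ⊆ X) : J ∈ opp X S ↔ X \ J ∈ S :=
  and_iff_right hJ

lemma opp_opp (hS : ∀ J ∈ S, J ⊆ X) : opp X (opp X S) = S := by
  ext J
  constructor
  · rintro ⟨hJX, -, hJ⟩
    rwa [Finset.sdiff_sdiff_eq_self hJX] at hJ
  · intro hJ
    exact ⟨hS J hJ, Finset.sdiff_subset, by rwa [Finset.sdiff_sdiff_eq_self (hS J hJ)]⟩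

lemma IsParacell.opp (h : IsParacell X S) : IsParacell X (opp X S) := by
  obtain ⟨⟨J₀, hJ₀⟩, hprop, hclose⟩ := h
  refine ⟨⟨X \ J₀, Finset.sdiff_subset, ?_⟩, ?_, ?_⟩
  · rwa [Finset.sdiff_sdiff_eq_self (hprop J₀ hJ₀).1]
  · rintro J ⟨hJX, hJ⟩
    simpa only [Finset.sdiff_sdiff_eq_self hJX] using (hprop _ hJ).sdiff
  · rintro I ⟨hIX, hI⟩ J ⟨hJX, hJ⟩
    rw [mem_opp_iff (Finset.inter_subset_left.trans hIX),
      mem_opp_iff (Finset.union_subset hIX hJX), Finset.sdiff_inter_distrib_right,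
      Finset.sdiff_union_distrib]
    exact (hclose _ hI _ hJ).symm

lemma IsPrecell.opp (h : IsPrecell X S) : IsPrecell X (opp X S) := by
  refine ⟨h.1.opp, fun J hJ => ?_⟩
  rw [mem_opp_iff hJ.1, mem_opp_iff Finset.sdiff_subset, Finset.sdiff_sdiff_eq_self hJ.1]
  exact (h.2 J hJ).symm

lemma IsCell.opp (h : IsCell X S) : IsCell X (opp X S) := by
  obtain ⟨hS, s, hsum, hpos⟩ := h
  refine ⟨hS.opp, fun j => -s j, by simp [hsum], fun J ⟨hJX, hJ⟩ => ?_⟩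
  have hcompl : ∑ j ∈ X \ J, s j = ∑ j ∈ X, s j - ∑ j ∈ J, s j :=
    Finset.sum_sdiff_eq_sub hJX
  have hcompl_pos := hpos _ hJ
  simp only [Finset.sum_neg_distrib]
  linarith

end Opp

def cellComap (X Y : Finset α) (π : α → α) (S : Set (Finset α)) : Set (Finset α) :=
  {J | IsProperSubset Y J ∧ {x ∈ X | π x ∈ J} ∈ S}

section Comap

variable {X Y : Finset α} {π : α → α}

lemma filter_mem_inter (I J : Finset α) :
    {x ∈ X | π x ∈ I ∩ J} = {x ∈ X | π x ∈ I} ∩ {x ∈ X | π x ∈ J} := by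
  simp only [Finset.mem_inter, Finset.filter_and]

lemma filter_mem_union (I J : Finset α) :
    {x ∈ X | π x ∈ I ∪ J} = {x ∈ X | π x ∈ I} ∪ {x ∈ X | π x ∈ J} := by
  simp only [Finset.mem_union, Finset.filter_or]

lemma filter_mem_sdiff (hπ : Set.MapsTo π X Y) (J : Finset α) :
    {x ∈ X | π x ∈ Y \ J} = X \ {x ∈ X | π x ∈ J} := by
  ext x
  simp only [Finset.mem_filter, Finset.mem_sdiff]
  exact ⟨fun ⟨hx, _, hJ⟩ => ⟨hx, fun h => hJ h.2⟩,
    fun ⟨hx, hJ⟩ => ⟨hx, hπ hx, fun h => hJ ⟨hx, h⟩⟩⟩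

lemma filter_mem_eq_self (hπ : Set.MapsTo π X Y) : {x ∈ X | π x ∈ Y} = X :=
  Finset.filter_true_of_mem fun _ hx => hπ hx

lemma subset_of_filter_mem_subset (hπ' : Set.SurjOn π X Y) {J K : Finset α} (hJ : J ⊆ Y)
    (h : {x ∈ X | π x ∈ J} ⊆ {x ∈ X | π x ∈ K}) : J ⊆ K := by
  intro y hy
  obtain ⟨x, hx, rfl⟩ := hπ' (hJ hy)
  exact (Finset.mem_filter.1 (h (Finset.mem_filter.2 ⟨hx, hy⟩))).2

lemma isProperSubset_filter_mem_iff (hπ : Set.MapsTo π X Y) (hπ' : Set.SurjOn π X Y)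
    {J : Finset α} (hJ : J ⊆ Y) :
    IsProperSubset X {x ∈ X | π x ∈ J} ↔ IsProperSubset Y J := by
  constructor
  · rintro ⟨-, hne, hX⟩
    refine ⟨hJ, ?_, ?_⟩
    · rintro rfl
      simp at hne
    · rintro rfl
      exact hX (filter_mem_eq_self hπ)
  · rintro ⟨-, hne, hY⟩
    refine ⟨Finset.filter_subset _ _, fun h => hne ?_, fun h => hY ?_⟩
    · exact Finset.subset_empty.1 (subset_of_filter_mem_subset hπ' hJ (by simp [h]))
    · exact hJ.antisymm
        (subset_of_filter_mem_subset hπ' le_rfl (by rw [filter_mem_eq_self hπ, h]))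

lemma mem_cellComap_iff (hπ : Set.MapsTo π X Y) (hπ' : Set.SurjOn π X Y)
    {S : Set (Finset α)} (hS : ∀ K ∈ S, IsProperSubset X K) {J : Finset α} :
    J ∈ cellComap X Y π S ↔ J ⊆ Y ∧ {x ∈ X | π x ∈ J} ∈ S := by
  refine ⟨fun h => ⟨h.1.1, h.2⟩, fun ⟨hJY, hJ⟩ => ⟨?_, hJ⟩⟩
  exact (isProperSubset_filter_mem_iff hπ hπ' hJY).1 (hS _ hJ)

lemma sum_filter_mem (s : α → ℝ) (J : Finset α) :
    ∑ x ∈ X with π x ∈ J, s x = ∑ j ∈ J, ∑ x ∈ X with π x = j, s x := by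
  rw [← Finset.sum_fiberwise_of_maps_to (g := π) (t := J) fun x hx => (Finset.mem_filter.1 hx).2]
  refine Finset.sum_congr rfl fun j hj => ?_
  rw [Finset.filter_filter]
  exact Finset.sum_congr
    (Finset.filter_congr fun x _ => ⟨fun h => h.2, fun h => ⟨h ▸ hj, h⟩⟩) fun _ _ => rfl

lemma IsPrecell.comap (hπ : Set.MapsTo π X Y) (hπ' : Set.SurjOn π X Y) (hY : 1 < Y.card)
    {S : Set (Finset α)} (hS : IsPrecell X S) : IsPrecell Y (cellComap X Y π S) := by
  obtain ⟨⟨-, hprop, hclose⟩, hdich⟩ := hS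
  have hmem : ∀ J, J ∈ cellComap X Y π S ↔ J ⊆ Y ∧ {x ∈ X | π x ∈ J} ∈ S :=
    fun J => mem_cellComap_iff hπ hπ' hprop
  have hdich' : ∀ J, IsProperSubset Y J →
      J ∈ cellComap X Y π S ∨ Y \ J ∈ cellComap X Y π S := by
    intro J hJ
    rw [hmem, hmem, filter_mem_sdiff hπ]
    have := hdich _ ((isProperSubset_filter_mem_iff hπ hπ' hJ.1).2 hJ)
    exact this.imp (⟨hJ.1, ·⟩) (⟨Finset.sdiff_subset, ·⟩)
  obtain ⟨a, ha, b, hb, hab⟩ := Finset.one_lt_card.1 hY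
  have hsingle : IsProperSubset Y {a} :=
    ⟨by simpa, by simp, fun h => hab (Finset.mem_singleton.1 (h ▸ hb)).symm⟩
  refine ⟨⟨(hdich' _ hsingle).elim (⟨_, ·⟩) (⟨_, ·⟩), fun J hJ => hJ.1, ?_⟩, hdich'⟩
  intro I hI J hJ
  rw [hmem] at hI hJ
  rw [hmem, hmem, filter_mem_inter, filter_mem_union]
  exact (hclose _ hI.2 _ hJ.2).imp (⟨Finset.inter_subset_left.trans hI.1, ·⟩)
    (⟨Finset.union_subset hI.1 hJ.1, ·⟩)

lemma opp_cellComap (hπ : Set.MapsTo π X Y) (S : Set (Finset α)) :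
    opp Y (cellComap X Y π S) = cellComap X Y π (opp X S) := by
  ext J
  simp only [opp, cellComap]
  constructor
  · rintro ⟨hJY, hJ, hS⟩
    rw [filter_mem_sdiff hπ] at hS
    exact ⟨by simpa only [Finset.sdiff_sdiff_eq_self hJY] using hJ.sdiff,
      Finset.filter_subset _ _, hS⟩
  · rintro ⟨hJ, -, hS⟩
    rw [← filter_mem_sdiff hπ] at hS
    exact ⟨hJ.1, hJ.sdiff, hS⟩

lemma IsCell.comap (hπ : Set.MapsTo π X Y) (hπ' : Set.SurjOn π X Y) (hY : 1 < Y.card)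
    {S : Set (Finset α)} (hS : IsCell X S) : IsCell Y (cellComap X Y π S) := by
  obtain ⟨hS, s, hsum, hpos⟩ := hS
  refine ⟨hS.comap hπ hπ' hY, fun j => ∑ x ∈ X with π x = j, s x, ?_, fun J hJ => ?_⟩
  · rw [← sum_filter_mem, filter_mem_eq_self hπ, hsum]
  · rw [← sum_filter_mem]
    exact hpos _ hJ.2

end Comap

lemma restCell_opp_eq_cellComap {A X : Finset α} {o : α} (hoA : o ∉ A) (hAX : insert o A ⊆ X)
    (S : Set (Finset α)) :
    restCell A o S (opp X S) = cellComap X (insert o A) (fun x => if x ∈ A then x else o) S := by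
  ext J
  simp only [restCell, cellComap]
  refine and_congr_right fun hJ => ?_
  by_cases hoJ : o ∈ J
  · have hpre : {x ∈ X | (if x ∈ A then x else o) ∈ J} = X \ (A \ J) := by
      ext x
      by_cases hx : x ∈ A <;> simp [hx, hoJ]
    have hJA : ¬J ⊆ A := fun h => hoA (h hoJ)
    rw [hpre, mem_opp_iff (Finset.sdiff_subset.trans ((Finset.subset_insert _ _).trans hAX))]
    simp [hoJ, hJA]
  · have hJA : J ⊆ A := fun x hx =>
      (Finset.mem_insert.1 (hJ.1 hx)).resolve_left fun hxo => hoJ (hxo ▸ hx)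
    have hpre : {x ∈ X | (if x ∈ A then x else o) ∈ J} = J := by
      ext x
      by_cases hx : x ∈ A
      · simp [hx, hAX (Finset.mem_insert_of_mem hx)]
      · simp [hx, hoJ, mt (@hJA x) hx]
    simp [hpre, hoJ, hJA]

theorem restCell_precell_general {α : Type*} [DecidableEq α] (A B : Finset α) (o : α)
    (hA : A.Nonempty) (hoA : o ∉ A)
    (X : Finset α) (hX : X = insert o (A ∪ B))
    (S : Set (Finset α)) (hS : IsPrecell X S) :
    (IsPrecell (insert o A) (restCell A o S (opp X S)) ∧
      restCell A o (opp X S) S = opp (insert o A) (restCell A o S (opp X S))) ∧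
    (IsCell X S →
      IsCell (insert o A) (restCell A o S (opp X S)) ∧
      IsCell (insert o A) (restCell A o (opp X S) S)) := by
  set π : α → α := fun x => if x ∈ A then x else o
  have hAX : insert o A ⊆ X := hX ▸ Finset.insert_subset_insert o Finset.subset_union_left
  have hπ : Set.MapsTo π X ↑(insert o A) := fun x _ => by
    by_cases hx : x ∈ A <;> simp [π, hx]
  have hπ' : Set.SurjOn π X ↑(insert o A) := by
    intro y hy
    rcases Finset.mem_insert.1 hy with rfl | hyA
    · exact ⟨y, hAX (Finset.mem_insert_self _ _), by simp [π]⟩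
    · exact ⟨y, hAX (Finset.mem_insert_of_mem hyA), by simp [π, hyA]⟩
  have hcard : 1 < (insert o A).card := by
    rw [Finset.card_insert_of_notMem hoA]
    exact Nat.lt_add_of_pos_left hA.card_pos
  have hrest := restCell_opp_eq_cellComap hoA hAX
  have hdual : restCell A o (opp X S) S = opp (insert o A) (restCell A o S (opp X S)) :=
    calc restCell A o (opp X S) S = restCell A o (opp X S) (opp X (opp X S)) := by
          rw [opp_opp fun J hJ => (hS.1.2.1 J hJ).1]
      _ = opp (insert o A) (restCell A o S (opp X S)) := by
          rw [hrest, hrest, opp_cellComap hπ]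
  refine ⟨⟨hrest S ▸ hS.comap hπ hπ' hcard, hdual⟩, fun hcell => ⟨?_, ?_⟩⟩
  · exact hrest S ▸ hcell.comap hπ hπ' hcard
  · rw [hdual, hrest]
    exact (hcell.comap hπ hπ' hcard).opp

/-- `(S‖1,A)` and `(S'‖1,A)` are opposite precells relative to `A ∪ {1}`; cells if
`S` is a cell. -/
theorem restCell_precell {α : Type*} [DecidableEq α] (A B : Finset α) (o : α)
    (hA : A.Nonempty) (hB : B.Nonempty) (hAB : Disjoint A B)
    (hoA : o ∉ A) (hoB : o ∉ B)
    (X : Finset α) (hX : X = insert o (A ∪ B))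
    (S : Set (Finset α)) (hS : IsPrecell X S) :
    (IsPrecell (insert o A) (restCell A o S (opp X S)) ∧
      restCell A o (opp X S) S = opp (insert o A) (restCell A o S (opp X S))) ∧
    (IsCell X S →
      IsCell (insert o A) (restCell A o S (opp X S)) ∧
      IsCell (insert o A) (restCell A o (opp X S) S)) :=
  restCell_precell_general A B o hA hoA X hX S hS

end GRF
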